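/- Let α, β > 0, x₁, x₂ ∈ ℝ, let B be the breather with the 5th-order speeds (δ₅, γ₅), and tilde B its profile function. Then for all (t,x) ∈ ℝ²: ∂_t tilde B = (α² + β²)² B − 2(β² − α²)( B_{xx} + 2B³ ), where B_{xx} = ∂_x² B. -/

import Mathlib

noncomputable section

open Real

/-- The breather profile function `tilde B`. -/
def Btil (α β δ γ x₁ x₂ t x : ℝ) : ℝ :=
  2 * arctan (β / α * sin (α * (x + δ * t + x₁)) / cosh (β * (x + γ * t + x₂)))

/-- x-derivative of Btil, in explicit form. -/
lemma hasDerivAt_Btil_x (α β δ γ x₁ x₂ t x : ℝ) (hα : α ≠ 0) :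
    HasDerivAt (Btil α β δ γ x₁ x₂ t)
      (2*(β/α)*(α * cos (α*(x+δ*t+x₁)) * cosh (β*(x+γ*t+x₂))
          - β * sin (α*(x+δ*t+x₁)) * sinh (β*(x+γ*t+x₂)))
        / (cosh (β*(x+γ*t+x₂))^2 + (β/α)^2 * sin (α*(x+δ*t+x₁))^2)) x := by
  have h1 : HasDerivAt (fun x : ℝ => α * (x + δ * t + x₁)) α x := by
    simpa using (((hasDerivAt_id x).add_const (δ*t)).add_const x₁).const_mul α
  have h2 : HasDerivAt (fun x : ℝ => β * (x + γ * t + x₂)) β x := by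
    simpa using (((hasDerivAt_id x).add_const (γ*t)).add_const x₂).const_mul β
  have hs : HasDerivAt (fun x : ℝ => sin (α * (x + δ * t + x₁)))
      (cos (α * (x + δ * t + x₁)) * α) x := (Real.hasDerivAt_sin _).comp x h1
  have hc : HasDerivAt (fun x : ℝ => cosh (β * (x + γ * t + x₂)))
      (sinh (β * (x + γ * t + x₂)) * β) x := (Real.hasDerivAt_cosh _).comp x h2
  have hcne : cosh (β * (x + γ * t + x₂)) ≠ 0 := (Real.cosh_pos _).ne'
  have hu : HasDerivAt (fun x : ℝ => β / α * sin (α * (x + δ * t + x₁)) / cosh (β * (x + γ * t + x₂)))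
      ((β / α * (cos (α * (x + δ * t + x₁)) * α) * cosh (β * (x + γ * t + x₂))
        - β / α * sin (α * (x + δ * t + x₁)) * (sinh (β * (x + γ * t + x₂)) * β))
        / cosh (β * (x + γ * t + x₂)) ^ 2) x := (hs.const_mul (β/α)).div hc hcne
  have harc := (Real.hasDerivAt_arctan (β / α * sin (α * (x + δ * t + x₁)) / cosh (β * (x + γ * t + x₂)))).comp x hu
  have hfin := harc.const_mul 2
  refine hfin.congr_deriv ?_
  set s := sin (α * (x + δ * t + x₁))
  set c := cos (α * (x + δ * t + x₁))
  set S := sinh (β * (x + γ * t + x₂))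
  set C := cosh (β * (x + γ * t + x₂))
  have hD : C^2 + (β/α)^2 * s^2 > 0 := by positivity
  have h1u : 1 + (β / α * s / C)^2 = (C^2 + (β/α)^2 * s^2)/C^2 := by
    field_simp
  rw [h1u]
  field_simp

lemma hasDerivAt_Btil_t (α β δ γ x₁ x₂ t x : ℝ) (hα : α ≠ 0) :
    HasDerivAt (fun s => Btil α β δ γ x₁ x₂ s x)
      (2*(β/α)*(α * δ * cos (α*(x+δ*t+x₁)) * cosh (β*(x+γ*t+x₂))
          - β * γ * sin (α*(x+δ*t+x₁)) * sinh (β*(x+γ*t+x₂)))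
        / (cosh (β*(x+γ*t+x₂))^2 + (β/α)^2 * sin (α*(x+δ*t+x₁))^2)) t := by
  have h1 : HasDerivAt (fun s : ℝ => α * (x + δ * s + x₁)) (α * δ) t := by
    have : HasDerivAt (fun s : ℝ => x + δ * s + x₁) δ t := by
      simpa using (((hasDerivAt_id t).const_mul δ).const_add x).add_const x₁
    simpa using this.const_mul α
  have h2 : HasDerivAt (fun s : ℝ => β * (x + γ * s + x₂)) (β * γ) t := by
    have : HasDerivAt (fun s : ℝ => x + γ * s + x₂) γ t := by
      simpa using (((hasDerivAt_id t).const_mul γ).const_add x).add_const x₂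
    simpa using this.const_mul β
  have hs : HasDerivAt (fun s : ℝ => sin (α * (x + δ * s + x₁)))
      (cos (α * (x + δ * t + x₁)) * (α * δ)) t := (Real.hasDerivAt_sin _).comp t h1
  have hc : HasDerivAt (fun s : ℝ => cosh (β * (x + γ * s + x₂)))
      (sinh (β * (x + γ * t + x₂)) * (β * γ)) t := (Real.hasDerivAt_cosh _).comp t h2
  have hcne : cosh (β * (x + γ * t + x₂)) ≠ 0 := (Real.cosh_pos _).ne'
  have hu := (hs.const_mul (β/α)).div hc hcne
  have harc := (Real.hasDerivAt_arctan (β / α * sin (α * (x + δ * t + x₁)) / cosh (β * (x + γ * t + x₂)))).comp t hu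
  have hfin := harc.const_mul 2
  refine hfin.congr_deriv ?_
  set s := sin (α * (x + δ * t + x₁))
  set c := cos (α * (x + δ * t + x₁))
  set S := sinh (β * (x + γ * t + x₂))
  set C := cosh (β * (x + γ * t + x₂))
  have hD : C^2 + (β/α)^2 * s^2 > 0 := by positivity
  have h1u : 1 + (β / α * s / C)^2 = (C^2 + (β/α)^2 * s^2)/C^2 := by
    field_simp
  rw [h1u]
  field_simp

/-- explicit first x-derivative of Btil -/
def Bf (α β δ γ x₁ x₂ t x : ℝ) : ℝ :=
  2*(β/α)*(α * cos (α*(x+δ*t+x₁)) * cosh (β*(x+γ*t+x₂))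
      - β * sin (α*(x+δ*t+x₁)) * sinh (β*(x+γ*t+x₂)))
    / (cosh (β*(x+γ*t+x₂))^2 + (β/α)^2 * sin (α*(x+δ*t+x₁))^2)

/-- explicit second x-derivative of Btil -/
def Bf1 (α β δ γ x₁ x₂ t x : ℝ) : ℝ :=
  ((-2*(β/α)*(α^2+β^2) * sin (α*(x+δ*t+x₁)) * cosh (β*(x+γ*t+x₂)))
      * (cosh (β*(x+γ*t+x₂))^2 + (β/α)^2 * sin (α*(x+δ*t+x₁))^2)
    - (2*(β/α)*(α * cos (α*(x+δ*t+x₁)) * cosh (β*(x+γ*t+x₂))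
        - β * sin (α*(x+δ*t+x₁)) * sinh (β*(x+γ*t+x₂))))
      * (2*β*cosh (β*(x+γ*t+x₂))*sinh (β*(x+γ*t+x₂))
         + 2*α*(β/α)^2 * sin (α*(x+δ*t+x₁)) * cos (α*(x+δ*t+x₁))))
  / (cosh (β*(x+γ*t+x₂))^2 + (β/α)^2 * sin (α*(x+δ*t+x₁))^2)^2

lemma hasDerivAt_Bf (α β δ γ x₁ x₂ t x : ℝ) (hα : α ≠ 0) :
    HasDerivAt (Bf α β δ γ x₁ x₂ t) (Bf1 α β δ γ x₁ x₂ t x) x := by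
  have h1 : HasDerivAt (fun x : ℝ => α * (x + δ * t + x₁)) α x := by
    simpa using (((hasDerivAt_id x).add_const (δ*t)).add_const x₁).const_mul α
  have h2 : HasDerivAt (fun x : ℝ => β * (x + γ * t + x₂)) β x := by
    simpa using (((hasDerivAt_id x).add_const (γ*t)).add_const x₂).const_mul β
  have hs : HasDerivAt (fun x : ℝ => sin (α * (x + δ * t + x₁)))
      (cos (α * (x + δ * t + x₁)) * α) x := (Real.hasDerivAt_sin _).comp x h1
  have hc : HasDerivAt (fun x : ℝ => cos (α * (x + δ * t + x₁)))
      (-sin (α * (x + δ * t + x₁)) * α) x := (Real.hasDerivAt_cos _).comp x h1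
  have hS : HasDerivAt (fun x : ℝ => sinh (β * (x + γ * t + x₂)))
      (cosh (β * (x + γ * t + x₂)) * β) x := (Real.hasDerivAt_sinh _).comp x h2
  have hC : HasDerivAt (fun x : ℝ => cosh (β * (x + γ * t + x₂)))
      (sinh (β * (x + γ * t + x₂)) * β) x := (Real.hasDerivAt_cosh _).comp x h2
  have hN : HasDerivAt (fun x : ℝ => 2*(β/α)*(α * cos (α*(x+δ*t+x₁)) * cosh (β*(x+γ*t+x₂))
      - β * sin (α*(x+δ*t+x₁)) * sinh (β*(x+γ*t+x₂))))
      (2*(β/α)*((α * (-sin (α*(x+δ*t+x₁)) * α)) * cosh (β*(x+γ*t+x₂))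
        + α * cos (α*(x+δ*t+x₁)) * (sinh (β * (x + γ * t + x₂)) * β)
        - (β * (cos (α*(x+δ*t+x₁)) * α) * sinh (β*(x+γ*t+x₂))
          + β * sin (α*(x+δ*t+x₁)) * (cosh (β * (x + γ * t + x₂)) * β)))) x := by
    exact (((((hc.const_mul α).mul hC)).sub (((hs.const_mul β)).mul hS)).const_mul (2*(β/α)))
  have hD : HasDerivAt (fun x : ℝ => cosh (β*(x+γ*t+x₂))^2 + (β/α)^2 * sin (α*(x+δ*t+x₁))^2)
      (2 * cosh (β*(x+γ*t+x₂)) * (sinh (β * (x + γ * t + x₂)) * β)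
        + (β/α)^2 * (2 * sin (α*(x+δ*t+x₁)) * (cos (α * (x + δ * t + x₁)) * α))) x := by
    have a1 : HasDerivAt (fun x : ℝ => cosh (β*(x+γ*t+x₂))^2)
        (2 * cosh (β*(x+γ*t+x₂)) * (sinh (β * (x + γ * t + x₂)) * β)) x := by
      have heq : (fun x : ℝ => cosh (β*(x+γ*t+x₂))^2)
          = fun x : ℝ => cosh (β*(x+γ*t+x₂)) * cosh (β*(x+γ*t+x₂)) := by
        funext y; ring
      rw [heq]; refine (hC.mul hC).congr_deriv ?_; ring
    have a2 : HasDerivAt (fun x : ℝ => sin (α*(x+δ*t+x₁))^2)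
        (2 * sin (α*(x+δ*t+x₁)) * (cos (α * (x + δ * t + x₁)) * α)) x := by
      have heq : (fun x : ℝ => sin (α*(x+δ*t+x₁))^2)
          = fun x : ℝ => sin (α*(x+δ*t+x₁)) * sin (α*(x+δ*t+x₁)) := by
        funext y; ring
      rw [heq]; refine (hs.mul hs).congr_deriv ?_; ring
    exact a1.add (a2.const_mul _)
  have hDne : (cosh (β*(x+γ*t+x₂))^2 + (β/α)^2 * sin (α*(x+δ*t+x₁))^2) ≠ 0 := by
    have : (0:ℝ) < cosh (β*(x+γ*t+x₂))^2 + (β/α)^2 * sin (α*(x+δ*t+x₁))^2 := by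
      have := Real.cosh_pos (β*(x+γ*t+x₂)); positivity
    exact this.ne'
  have := hN.div hD hDne
  refine this.congr_deriv ?_
  unfold Bf1
  set s := sin (α * (x + δ * t + x₁))
  set c := cos (α * (x + δ * t + x₁))
  set S := sinh (β * (x + γ * t + x₂))
  set C := cosh (β * (x + γ * t + x₂))
  field_simp
  ring

/-- explicit third x-derivative of Btil -/
def Bf2 (α β δ γ x₁ x₂ t x : ℝ) : ℝ :=
  (((-2*(β/α)*(α^2+β^2) * (α * cos (α*(x+δ*t+x₁)) * cosh (β*(x+γ*t+x₂))
        + β * sin (α*(x+δ*t+x₁)) * sinh (β*(x+γ*t+x₂))))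
      * (cosh (β*(x+γ*t+x₂))^2 + (β/α)^2 * sin (α*(x+δ*t+x₁))^2)
    - (2*(β/α)*(α * cos (α*(x+δ*t+x₁)) * cosh (β*(x+γ*t+x₂))
        - β * sin (α*(x+δ*t+x₁)) * sinh (β*(x+γ*t+x₂))))
      * (2*β^2*(sinh (β*(x+γ*t+x₂))^2 + cosh (β*(x+γ*t+x₂))^2)
        + 2*α^2*(β/α)^2*(cos (α*(x+δ*t+x₁))^2 - sin (α*(x+δ*t+x₁))^2)))
      * (cosh (β*(x+γ*t+x₂))^2 + (β/α)^2 * sin (α*(x+δ*t+x₁))^2)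
   - 2 * ((-2*(β/α)*(α^2+β^2) * sin (α*(x+δ*t+x₁)) * cosh (β*(x+γ*t+x₂)))
      * (cosh (β*(x+γ*t+x₂))^2 + (β/α)^2 * sin (α*(x+δ*t+x₁))^2)
    - (2*(β/α)*(α * cos (α*(x+δ*t+x₁)) * cosh (β*(x+γ*t+x₂))
        - β * sin (α*(x+δ*t+x₁)) * sinh (β*(x+γ*t+x₂))))
      * (2*β*cosh (β*(x+γ*t+x₂))*sinh (β*(x+γ*t+x₂))
         + 2*α*(β/α)^2 * sin (α*(x+δ*t+x₁)) * cos (α*(x+δ*t+x₁))))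
      * (2*β*cosh (β*(x+γ*t+x₂))*sinh (β*(x+γ*t+x₂))
         + 2*α*(β/α)^2 * sin (α*(x+δ*t+x₁)) * cos (α*(x+δ*t+x₁))))
  / (cosh (β*(x+γ*t+x₂))^2 + (β/α)^2 * sin (α*(x+δ*t+x₁))^2)^3

lemma hasDerivAt_Bf1 (α β δ γ x₁ x₂ t x : ℝ) (hα : α ≠ 0) :
    HasDerivAt (Bf1 α β δ γ x₁ x₂ t) (Bf2 α β δ γ x₁ x₂ t x) x := by
  have h1 : HasDerivAt (fun x : ℝ => α * (x + δ * t + x₁)) α x := by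
    simpa using (((hasDerivAt_id x).add_const (δ*t)).add_const x₁).const_mul α
  have h2 : HasDerivAt (fun x : ℝ => β * (x + γ * t + x₂)) β x := by
    simpa using (((hasDerivAt_id x).add_const (γ*t)).add_const x₂).const_mul β
  have hs : HasDerivAt (fun x : ℝ => sin (α * (x + δ * t + x₁)))
      (cos (α * (x + δ * t + x₁)) * α) x := (Real.hasDerivAt_sin _).comp x h1
  have hc : HasDerivAt (fun x : ℝ => cos (α * (x + δ * t + x₁)))
      (-sin (α * (x + δ * t + x₁)) * α) x := (Real.hasDerivAt_cos _).comp x h1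
  have hS : HasDerivAt (fun x : ℝ => sinh (β * (x + γ * t + x₂)))
      (cosh (β * (x + γ * t + x₂)) * β) x := (Real.hasDerivAt_sinh _).comp x h2
  have hC : HasDerivAt (fun x : ℝ => cosh (β * (x + γ * t + x₂)))
      (sinh (β * (x + γ * t + x₂)) * β) x := (Real.hasDerivAt_cosh _).comp x h2
  -- D and its derivative
  have hD : HasDerivAt (fun x : ℝ => cosh (β*(x+γ*t+x₂))^2 + (β/α)^2 * sin (α*(x+δ*t+x₁))^2)
      (2 * cosh (β*(x+γ*t+x₂)) * (sinh (β * (x + γ * t + x₂)) * β)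
        + (β/α)^2 * (2 * sin (α*(x+δ*t+x₁)) * (cos (α * (x + δ * t + x₁)) * α))) x := by
    have a1 : HasDerivAt (fun x : ℝ => cosh (β*(x+γ*t+x₂))^2)
        (2 * cosh (β*(x+γ*t+x₂)) * (sinh (β * (x + γ * t + x₂)) * β)) x := by
      have heq : (fun x : ℝ => cosh (β*(x+γ*t+x₂))^2)
          = fun x : ℝ => cosh (β*(x+γ*t+x₂)) * cosh (β*(x+γ*t+x₂)) := by
        funext y; ring
      rw [heq]; refine (hC.mul hC).congr_deriv ?_; ring
    have a2 : HasDerivAt (fun x : ℝ => sin (α*(x+δ*t+x₁))^2)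
        (2 * sin (α*(x+δ*t+x₁)) * (cos (α * (x + δ * t + x₁)) * α)) x := by
      have heq : (fun x : ℝ => sin (α*(x+δ*t+x₁))^2)
          = fun x : ℝ => sin (α*(x+δ*t+x₁)) * sin (α*(x+δ*t+x₁)) := by
        funext y; ring
      rw [heq]; refine (hs.mul hs).congr_deriv ?_; ring
    exact a1.add (a2.const_mul _)
  -- N' function derivative
  have hN' : HasDerivAt (fun x : ℝ => -2*(β/α)*(α^2+β^2) * sin (α*(x+δ*t+x₁)) * cosh (β*(x+γ*t+x₂)))
      ((-2*(β/α)*(α^2+β^2) * (cos (α * (x + δ * t + x₁)) * α)) * cosh (β*(x+γ*t+x₂))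
        + -2*(β/α)*(α^2+β^2) * sin (α*(x+δ*t+x₁)) * (sinh (β * (x + γ * t + x₂)) * β)) x := by
    exact ((hs.const_mul (-2*(β/α)*(α^2+β^2))).mul hC)
  -- N function derivative
  have hN : HasDerivAt (fun x : ℝ => 2*(β/α)*(α * cos (α*(x+δ*t+x₁)) * cosh (β*(x+γ*t+x₂))
      - β * sin (α*(x+δ*t+x₁)) * sinh (β*(x+γ*t+x₂))))
      (2*(β/α)*((α * (-sin (α*(x+δ*t+x₁)) * α)) * cosh (β*(x+γ*t+x₂))
        + α * cos (α*(x+δ*t+x₁)) * (sinh (β * (x + γ * t + x₂)) * β)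
        - (β * (cos (α*(x+δ*t+x₁)) * α) * sinh (β*(x+γ*t+x₂))
          + β * sin (α*(x+δ*t+x₁)) * (cosh (β * (x + γ * t + x₂)) * β)))) x := by
    exact (((((hc.const_mul α).mul hC)).sub (((hs.const_mul β)).mul hS)).const_mul (2*(β/α)))
  -- D' function derivative
  have hD' : HasDerivAt (fun x : ℝ => 2*β*cosh (β*(x+γ*t+x₂))*sinh (β*(x+γ*t+x₂))
         + 2*α*(β/α)^2 * sin (α*(x+δ*t+x₁)) * cos (α*(x+δ*t+x₁)))
      ((2*β*(sinh (β * (x + γ * t + x₂)) * β))*sinh (β*(x+γ*t+x₂))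
        + 2*β*cosh (β*(x+γ*t+x₂))*(cosh (β * (x + γ * t + x₂)) * β)
        + ((2*α*(β/α)^2 * (cos (α * (x + δ * t + x₁)) * α)) * cos (α*(x+δ*t+x₁))
          + 2*α*(β/α)^2 * sin (α*(x+δ*t+x₁)) * (-sin (α*(x+δ*t+x₁)) * α))) x := by
    exact (((hC.const_mul (2*β)).mul hS).add ((hs.const_mul (2*α*(β/α)^2)).mul hc))
  -- numerator G of Bf1
  have hG := (hN'.mul hD).sub (hN.mul hD')
  have hDpos : (0:ℝ) < cosh (β*(x+γ*t+x₂))^2 + (β/α)^2 * sin (α*(x+δ*t+x₁))^2 := by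
    have := Real.cosh_pos (β*(x+γ*t+x₂)); positivity
  have hD2 : HasDerivAt (fun x : ℝ => (cosh (β*(x+γ*t+x₂))^2 + (β/α)^2 * sin (α*(x+δ*t+x₁))^2)^2)
      (2 * (cosh (β*(x+γ*t+x₂))^2 + (β/α)^2 * sin (α*(x+δ*t+x₁))^2)^1
        * (2 * cosh (β*(x+γ*t+x₂)) * (sinh (β * (x + γ * t + x₂)) * β)
        + (β/α)^2 * (2 * sin (α*(x+δ*t+x₁)) * (cos (α * (x + δ * t + x₁)) * α)))) x := by
    exact (hD.pow 2).congr_deriv (by norm_num)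
  have hD2ne : (cosh (β*(x+γ*t+x₂))^2 + (β/α)^2 * sin (α*(x+δ*t+x₁))^2)^2 ≠ 0 := by
    positivity
  have hfin := hG.div hD2 hD2ne
  refine hfin.congr_deriv ?_
  unfold Bf2
  simp only [Pi.mul_apply, Pi.sub_apply]
  set s := sin (α * (x + δ * t + x₁))
  set c := cos (α * (x + δ * t + x₁))
  set S := sinh (β * (x + γ * t + x₂))
  set C := cosh (β * (x + γ * t + x₂))
  field_simp
  ring


/-- The breather `B = ∂ₓ tilde B`. -/
def B (α β δ γ x₁ x₂ t x : ℝ) : ℝ :=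
  deriv (Btil α β δ γ x₁ x₂ t) x

theorem breather_fifth_order_time_derivative_identity
    (α β x₁ x₂ : ℝ) (hα : 0 < α) (hβ : 0 < β)
    (δ γ : ℝ)
    (hδ : δ = -α^4 + 10*α^2*β^2 - 5*β^4)
    (hγ : γ = -β^4 + 10*α^2*β^2 - 5*α^4) :
    ∀ t x : ℝ,
      deriv (fun s => Btil α β δ γ x₁ x₂ s x) t
        = (α^2 + β^2)^2 * B α β δ γ x₁ x₂ t x
          - 2 * (β^2 - α^2) * (iteratedDeriv 2 (B α β δ γ x₁ x₂ t) x
              + 2 * (B α β δ γ x₁ x₂ t x)^3) := by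
  intro t x
  have hα0 : α ≠ 0 := hα.ne'
  have hBeq : B α β δ γ x₁ x₂ t = Bf α β δ γ x₁ x₂ t := by
    funext y
    exact (hasDerivAt_Btil_x α β δ γ x₁ x₂ t y hα0).deriv
  have hT : deriv (fun s => Btil α β δ γ x₁ x₂ s x) t
      = 2*(β/α)*(α * δ * cos (α*(x+δ*t+x₁)) * cosh (β*(x+γ*t+x₂))
          - β * γ * sin (α*(x+δ*t+x₁)) * sinh (β*(x+γ*t+x₂)))
        / (cosh (β*(x+γ*t+x₂))^2 + (β/α)^2 * sin (α*(x+δ*t+x₁))^2) :=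
    (hasDerivAt_Btil_t α β δ γ x₁ x₂ t x hα0).deriv
  have hBf1eq : deriv (Bf α β δ γ x₁ x₂ t) = Bf1 α β δ γ x₁ x₂ t := by
    funext y
    exact (hasDerivAt_Bf α β δ γ x₁ x₂ t y hα0).deriv
  have hIter : iteratedDeriv 2 (B α β δ γ x₁ x₂ t) x = Bf2 α β δ γ x₁ x₂ t x := by
    rw [hBeq, iteratedDeriv_succ, iteratedDeriv_one, hBf1eq]
    exact (hasDerivAt_Bf1 α β δ γ x₁ x₂ t x hα0).deriv
  rw [hT, hIter, hBeq]
  unfold Bf Bf2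
  set s := sin (α * (x + δ * t + x₁)) with hsdef
  set c := cos (α * (x + δ * t + x₁)) with hcdef
  set S := sinh (β * (x + γ * t + x₂)) with hSdef
  set C := cosh (β * (x + γ * t + x₂)) with hCdef
  have h1 : s^2 + c^2 = 1 := by rw [hsdef, hcdef]; exact sin_sq_add_cos_sq _
  have h2 : C^2 - S^2 = 1 := by rw [hSdef, hCdef]; exact cosh_sq_sub_sinh_sq _
  have hC1 : (1:ℝ) ≤ C := by rw [hCdef]; exact one_le_cosh _
  have hDpos : (0:ℝ) < C^2 + (β/α)^2 * s^2 := by positivity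
  subst hδ hγ
  field_simp
  linear_combination (12*α^5*β^4*c*C^3 - 12*α^4*β^5*s*S*C^2 + 12*α^3*β^6*s^2*c*C - 12*α^2*β^7*s^3*S - 12*α^7*β^2*c*C^3 + 12*α^6*β^3*s*S*C^2 - 12*α^5*β^4*s^2*c*C + 12*α^4*β^5*s^3*S) * h1 + (- 12*α^5*β^4*c*C^3 + 12*α^4*β^5*s*S*C^2 - 12*α^3*β^6*s^2*c*C + 12*α^2*β^7*s^3*S + 12*α^7*β^2*c*C^3 - 12*α^6*β^3*s*S*C^2 + 12*α^5*β^4*s^2*c*C - 12*α^4*β^5*s^3*S) * h2
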